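/- In the EPG construction setup: let u be the parent of v. Then (a) if v ∉ {a_0, a_{k−1}}, then l_y(u) = r_y(v) and [l_x(u), p_x(u)] ∩ [l_x(v), q_x(v)] contains more than one point; (b) if v ∈ {a_0, a_{k−1}} and u = r, then r_y(u) = r_y(v) and [l_x(u), q_x(u)] ∩ [l_x(v), q_x(v)] contains more than one point; and (c) if v = a_{k−1} and u ≠ r, then l_y(u) = l_y(v) and [l_x(u), p_x(u)] ∩ [l_x(v), p_x(v)] contains more than one point. -/
import Mathlib


open SimpleGraph Set Function

/-- `u` is an ancestor of `v` with respect to root `r`: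
`u` lies on the unique path in `T` from `r` to `v`. -/
def IsAncestor {V : Type*} (T : SimpleGraph V) (r u v : V) : Prop :=
  ∀ p : T.Walk r v, p.IsPath → u ∈ p.support

/-- `u` is the parent of `v` with respect to root `r`. -/
def IsParent {V : Type*} (T : SimpleGraph V) (r u v : V) : Prop :=
  IsAncestor T r u v ∧ u ≠ v ∧ T.Adj u v

/-- `L^r(u)`: the set of leaves of `T` that are descendants of `u`. -/
def LeafSet {V : Type*} (T : SimpleGraph V) [Fintype V] [DecidableRel T.Adj] (r u : V) :
    Set V :=
  {c | T.degree c = 1 ∧ IsAncestor T r u c}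

/-- The leaf `c_{j mod k}` index. -/
def cidx {k : ℕ} (hk : 0 < k) (j : ℕ) : Fin k := ⟨j % k, Nat.mod_lt _ hk⟩

/-- A set `A` of leaves is cyclically consecutive with respect to the enumeration `c`. -/
def CycConsec {V : Type*} {k : ℕ} (hk : 0 < k) (c : Fin k → V) (A : Set V) : Prop :=
  ∃ j m : ℕ, A = {x | ∃ t ≤ m, x = c (cidx hk (j + t))}

section helpers

variable {V : Type*} [DecidableEq V] {T : SimpleGraph V} {r u v c : V}

lemma path_unique (hT : T.IsTree) {x y : V} {p q : T.Walk x y} (hp : p.IsPath) (hq : q.IsPath) :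
    p = q :=
  (hT.existsUnique_path x y).unique hp hq

lemma length_eq_dist (hT : T.IsTree) {x y : V} {p : T.Walk x y} (hp : p.IsPath) :
    p.length = T.dist x y := by
  obtain ⟨w, hw⟩ := hT.isConnected.exists_walk_length_eq_dist x y
  have h1 : p.length = w.bypass.length := congrArg Walk.length (path_unique hT hp w.bypass_isPath)
  have h2 := w.length_bypass_le
  have h3 := SimpleGraph.dist_le p
  omega

lemma parent_eq_concat (hT : T.IsTree) {p : T.Walk r v} (hp : p.IsPath) (h : IsParent T r u v) :
    ∃ (q : T.Walk r u) (_ : q.IsPath), p = q.concat h.2.2 := by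
  have hu : u ∈ p.support := h.1 p hp
  have hd : (p.dropUntil u hu).IsPath := hp.dropUntil hu
  have hcons : (Walk.cons h.2.2 Walk.nil).IsPath := by
    simp [Walk.cons_isPath_iff, h.2.1]
  have he : p.dropUntil u hu = Walk.cons h.2.2 Walk.nil := path_unique hT hd hcons
  exact ⟨p.takeUntil u hu, hp.takeUntil hu,
    by rw [Walk.concat_eq_append, ← he, Walk.take_spec]⟩

lemma parent_dist (hT : T.IsTree) (h : IsParent T r u v) :
    T.dist r v = T.dist r u + 1 := by
  obtain ⟨p, hp, -⟩ := hT.existsUnique_path r v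
  obtain ⟨q, hq, he⟩ := parent_eq_concat hT hp h
  have h1 : p.length = q.length + 1 := by rw [he, Walk.length_concat]
  rw [← length_eq_dist hT hp, ← length_eq_dist hT hq, h1]

lemma parent_unique (hT : T.IsTree) {u' : V} (h1 : IsParent T r u v)
    (h2 : IsParent T r u' v) : u = u' := by
  obtain ⟨p, hp, -⟩ := hT.existsUnique_path r v
  obtain ⟨q1, hq1, e1⟩ := parent_eq_concat hT hp h1
  obtain ⟨q2, hq2, e2⟩ := parent_eq_concat hT hp h2
  obtain ⟨hv, -⟩ := Walk.concat_inj (e1.symm.trans e2)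
  exact hv

lemma parent_ne_root (h : IsParent T r u v) : v ≠ r := by
  rintro contra
  subst contra
  have h1 := h.1 Walk.nil Walk.IsPath.nil
  simp only [Walk.support_nil, List.mem_singleton] at h1
  exact h.2.1 h1

lemma ancestor_trans (hT : T.IsTree) (h1 : IsAncestor T r u v) (h2 : IsAncestor T r v c) :
    IsAncestor T r u c := by
  intro p hp
  have hv : v ∈ p.support := h2 p hp
  have hu : u ∈ (p.takeUntil v hv).support := h1 _ (hp.takeUntil hv)
  exact p.support_takeUntil_subset hv hu

lemma leafSet_subset [Fintype V] [DecidableRel T.Adj] (hT : T.IsTree)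
    (h : IsAncestor T r u v) : LeafSet T r v ⊆ LeafSet T r u :=
  fun _ hc => ⟨hc.1, ancestor_trans hT h hc.2⟩

lemma self_mem_leafSet [Fintype V] [DecidableRel T.Adj] (h : T.degree v = 1) :
    v ∈ LeafSet T r v :=
  ⟨h, fun p _ => p.end_mem_support⟩

/-- a neighbor of `u` "toward the root". -/
lemma back_neighbor (hT : T.IsTree) (hur : u ≠ r) :
    ∃ w, T.Adj u w ∧ T.dist r w ≤ T.dist r u := by
  obtain ⟨q, hq, -⟩ := hT.existsUnique_path u r
  cases q with
  | nil => exact absurd rfl hur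
  | @cons _ w _ hadj q' =>
    refine ⟨w, hadj, ?_⟩
    have hw : w ∈ (Walk.cons hadj q').reverse.support := by
      simp [Walk.support_reverse]
    have hrev : (Walk.cons hadj q').reverse.IsPath := hq.reverse
    have h1 : ((Walk.cons hadj q').reverse.takeUntil w hw).length = T.dist r w :=
      length_eq_dist hT (hrev.takeUntil hw)
    have h2 := Walk.length_takeUntil_le (Walk.cons hadj q').reverse hw
    have h3 : (Walk.cons hadj q').reverse.length = T.dist r u := by
      rw [Walk.length_reverse, length_eq_dist hT hq, SimpleGraph.dist_comm]
    omega

lemma parent_deg_two [Fintype V] [DecidableRel T.Adj] (hT : T.IsTree)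
    (h : IsParent T r u v) (hur : u ≠ r) : 2 ≤ T.degree u := by
  obtain ⟨w, hadj, hdw⟩ := back_neighbor hT hur
  have hdv := parent_dist hT h
  have hvw : v ≠ w := by rintro rfl; omega
  have hsub : ({v, w} : Finset V) ⊆ T.neighborFinset u := by
    intro x hx
    simp only [Finset.mem_insert, Finset.mem_singleton] at hx
    rcases hx with rfl | rfl
    · exact (T.mem_neighborFinset u x).2 h.2.2
    · exact (T.mem_neighborFinset u x).2 hadj
  calc 2 = ({v, w} : Finset V).card := (Finset.card_pair hvw).symm
    _ ≤ (T.neighborFinset u).card := Finset.card_le_card hsub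
    _ = T.degree u := rfl

lemma csInf_shift {k : ℕ} {P : Fin k → Prop} {s t : Fin k} (hst : s ≤ t)
    (hP : ∀ i, P i ↔ s ≤ i ∧ i ≤ t) (c : ℝ) :
    sInf {x : ℝ | ∃ i : Fin k, P i ∧ x = ((i : ℕ) : ℝ) + c} = ((s : ℕ) : ℝ) + c := by
  apply IsLeast.csInf_eq
  constructor
  · exact ⟨s, (hP s).2 ⟨le_refl s, hst⟩, rfl⟩
  · rintro x ⟨i, hi, rfl⟩
    have h1 : (s : ℕ) ≤ (i : ℕ) := ((hP i).1 hi).1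
    have h2 : ((s : ℕ) : ℝ) ≤ ((i : ℕ) : ℝ) := by exact_mod_cast h1
    linarith

lemma csSup_shift {k : ℕ} {P : Fin k → Prop} {s t : Fin k} (hst : s ≤ t)
    (hP : ∀ i, P i ↔ s ≤ i ∧ i ≤ t) (c : ℝ) :
    sSup {x : ℝ | ∃ i : Fin k, P i ∧ x = ((i : ℕ) : ℝ) + c} = ((t : ℕ) : ℝ) + c := by
  apply IsGreatest.csSup_eq
  constructor
  · exact ⟨t, (hP t).2 ⟨hst, le_refl t⟩, rfl⟩
  · rintro x ⟨i, hi, rfl⟩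
    have h1 : (i : ℕ) ≤ (t : ℕ) := ((hP i).1 hi).2
    have h2 : ((i : ℕ) : ℝ) ≤ ((t : ℕ) : ℝ) := by exact_mod_cast h1
    linarith

lemma icc_nt {x1 x2 y1 y2 α β : ℝ} (h1 : x1 ≤ α) (h2 : β ≤ x2) (h3 : y1 ≤ α) (h4 : β ≤ y2)
    (h5 : α < β) : (Set.Icc x1 x2 ∩ Set.Icc y1 y2).Nontrivial :=
  ⟨α, ⟨⟨h1, by linarith⟩, ⟨h3, by linarith⟩⟩, β, ⟨⟨by linarith, h2⟩, ⟨by linarith, h4⟩⟩, ne_of_lt h5⟩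

end helpers


set_option maxHeartbeats 1000000 in
/-- properties of the C-shapes of a parent-child pair. -/
theorem stmt14
    {V : Type*} [Fintype V] (T : SimpleGraph V) [DecidableRel T.Adj]
    (hT : T.IsTree) {k : ℕ} (hk : 3 ≤ k) (a : Fin k → V)
    (hinj : Function.Injective a)
    (hleaf : ∀ v : V, T.degree v = 1 ↔ ∃ i : Fin k, v = a i)
    (r : V) (hr : 2 ≤ T.degree r)
    (hconsec : ∀ u : V, 2 ≤ T.degree u → ∃ s t : Fin k, s ≤ t ∧
        LeafSet T r u = {x | ∃ j : Fin k, s ≤ j ∧ j ≤ t ∧ x = a j})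
    (hra0 : T.Adj r (a ⟨0, by omega⟩))
    (a' : V) (ha' : IsParent T r a' (a ⟨k - 1, by omega⟩))
    (ha'deg : T.degree a' = 2 ∨ a' = r)
    (h : ℕ) (hmax : IsGreatest (Set.range fun u : V => T.dist r u) h)
    (lx px qx ly ry : V → ℝ)
    (hla : ∀ i : Fin k, 1 ≤ (i : ℕ) → (i : ℕ) ≤ k - 2 →
      lx (a i) = ((i : ℕ) : ℝ) ∧ px (a i) = ((i : ℕ) : ℝ) + 1 + (1/4 : ℝ) ∧
      qx (a i) = ((i : ℕ) : ℝ) + 3 * (1/4 : ℝ) ∧ ly (a i) = 0 ∧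
      ry (a i) = (h : ℝ) - (T.dist r (a i) : ℝ) + 1)
    (ha0 : lx (a ⟨0, by omega⟩) = 0 ∧ px (a ⟨0, by omega⟩) = 1 + (1/4 : ℝ) ∧
      qx (a ⟨0, by omega⟩) = (k : ℝ) - 1 + (1/4 : ℝ) ∧ ly (a ⟨0, by omega⟩) = 0 ∧
      ry (a ⟨0, by omega⟩) = (h : ℝ) + 1)
    (hak : lx (a ⟨k - 1, by omega⟩) = (k : ℝ) - 1 ∧
      px (a ⟨k - 1, by omega⟩) = (k : ℝ) + (1/4 : ℝ) ∧
      qx (a ⟨k - 1, by omega⟩) = (k : ℝ) - 1 + (1/4 : ℝ) ∧ ly (a ⟨k - 1, by omega⟩) = 0 ∧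
      ry (a ⟨k - 1, by omega⟩) = (h : ℝ) + 1)
    (hintv : ∀ v : V, 2 ≤ T.degree v → v ≠ r → v ≠ a' →
      lx v = sInf {x : ℝ | ∃ i : Fin k, a i ∈ LeafSet T r v ∧
          x = ((i : ℕ) : ℝ) + 2 * (1/4 : ℝ)} ∧
      px v = sSup {x : ℝ | ∃ i : Fin k, a i ∈ LeafSet T r v ∧
          x = ((i : ℕ) : ℝ) + 3 * (1/4 : ℝ)} ∧
      qx v = sInf {x : ℝ | ∃ i : Fin k, a i ∈ LeafSet T r v ∧
          x = ((i : ℕ) : ℝ) + 3 * (1/4 : ℝ)} ∧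
      ly v = (h : ℝ) - (T.dist r v : ℝ) ∧ ry v = (h : ℝ) - (T.dist r v : ℝ) + 1)
    (hane : a' ≠ r →
      (lx a' = (k : ℝ) - 1 + 2 * (1/4 : ℝ) ∧ px a' = (k : ℝ) - 1 + 3 * (1/4 : ℝ) ∧
        qx a' = (k : ℝ) - 1 + 3 * (1/4 : ℝ) ∧ ly a' = 0 ∧
        ry a' = (h : ℝ) - (T.dist r a' : ℝ) + 1) ∧
      (lx r = 2 * (1/4 : ℝ) ∧ px r = (k : ℝ) - 1 + 3 * (1/4 : ℝ) ∧ qx r = 1 ∧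
        ly r = (h : ℝ) ∧ ry r = (h : ℝ) + 1))
    (haeq : a' = r →
      lx r = 2 * (1/4 : ℝ) ∧ px r = (k : ℝ) - 1 + 3 * (1/4 : ℝ) ∧
      qx r = (k : ℝ) - 1 + (1/4 : ℝ) ∧ ly r = (h : ℝ) ∧ ry r = (h : ℝ) + 1)
    :
    ∀ u v : V, IsParent T r u v →
      ((v ≠ a ⟨0, by omega⟩ ∧ v ≠ a ⟨k - 1, by omega⟩ →
          ly u = ry v ∧ (Set.Icc (lx u) (px u) ∩ Set.Icc (lx v) (qx v)).Nontrivial) ∧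
        ((v = a ⟨0, by omega⟩ ∨ v = a ⟨k - 1, by omega⟩) → u = r →
          ry u = ry v ∧ (Set.Icc (lx u) (qx u) ∩ Set.Icc (lx v) (qx v)).Nontrivial) ∧
        (v = a ⟨k - 1, by omega⟩ → u ≠ r →
          ly u = ly v ∧ (Set.Icc (lx u) (px u) ∩ Set.Icc (lx v) (px v)).Nontrivial)) := by
  intro u v hpar
  letI : DecidableEq V := Classical.decEq V
  have hvr : v ≠ r := parent_ne_root hpar
  have hdist : T.dist r v = T.dist r u + 1 := parent_dist hT hpar
  have hdistR : (T.dist r v : ℝ) = (T.dist r u : ℝ) + 1 := by exact_mod_cast hdist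
  have hLsub : LeafSet T r v ⊆ LeafSet T r u := leafSet_subset hT hpar.1
  have hkR : (3 : ℝ) ≤ (k : ℝ) := by exact_mod_cast hk
  have hkmR : ((k - 1 : ℕ) : ℝ) = (k : ℝ) - 1 := by
    rw [Nat.cast_sub (by omega), Nat.cast_one]
  have hdegv : 0 < T.degree v := (T.degree_pos_iff_exists_adj v).2 ⟨u, hpar.2.2.symm⟩
  have hrdat : lx r = 2 * (1/4 : ℝ) ∧ px r = (k : ℝ) - 1 + 3 * (1/4 : ℝ) ∧
      ly r = (h : ℝ) ∧ ry r = (h : ℝ) + 1 := by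
    by_cases h' : a' = r
    · obtain ⟨e1, e2, e3, e4, e5⟩ := haeq h'
      exact ⟨e1, e2, e4, e5⟩
    · obtain ⟨-, e1, e2, e3, e4, e5⟩ := hane h'
      exact ⟨e1, e2, e4, e5⟩
  refine ⟨?_, ?_, ?_⟩
  · -- part (a)
    rintro ⟨hv0, hvk⟩
    have hpack : ∃ (ι : Fin k) (α : ℝ), a ι ∈ LeafSet T r u ∧
        lx v ≤ α ∧ α + 1/4 ≤ qx v ∧ ((ι : ℕ) : ℝ) + 1/2 ≤ α ∧
        α + 1/4 ≤ ((ι : ℕ) : ℝ) + 3/4 ∧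
        ry v = (h : ℝ) - (T.dist r v : ℝ) + 1 := by
      by_cases hdv : T.degree v = 1
      · obtain ⟨i, rfl⟩ := (hleaf v).1 hdv
        have hi0 : (i : ℕ) ≠ 0 := fun e => hv0 (congrArg a (Fin.val_injective e))
        have hik : (i : ℕ) ≠ k - 1 := fun e => hvk (congrArg a (Fin.val_injective e))
        have hi1 : 1 ≤ (i : ℕ) := by omega
        have hi2 : (i : ℕ) ≤ k - 2 := by have := i.2; omega
        obtain ⟨e1, e2, e3, e4, e5⟩ := hla i hi1 hi2
        exact ⟨i, ((i : ℕ) : ℝ) + 1/2, hLsub (self_mem_leafSet hdv),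
          by linarith [e1], by linarith [e3], le_refl _, by linarith, e5⟩
      · have hdeg2 : 2 ≤ T.degree v := by omega
        by_cases hva' : v = a'
        · subst hva'
          obtain ⟨⟨e1, e2, e3, e4, e5⟩, -⟩ := hane hvr
          have hmem : a ⟨k - 1, by omega⟩ ∈ LeafSet T r v :=
            ⟨(hleaf _).2 ⟨⟨k - 1, by omega⟩, rfl⟩, ha'.1⟩
          refine ⟨⟨k - 1, by omega⟩, (k : ℝ) - 1 + 1/2, hLsub hmem,
            by linarith [e1], by linarith [e3], ?_, ?_, e5⟩
          · show ((k - 1 : ℕ) : ℝ) + 1/2 ≤ (k : ℝ) - 1 + 1/2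
            rw [hkmR]
          · show (k : ℝ) - 1 + 1/2 + 1/4 ≤ ((k - 1 : ℕ) : ℝ) + 3/4
            rw [hkmR]; linarith
        · obtain ⟨s', t', hst', hLv⟩ := hconsec v hdeg2
          have hmemv : ∀ i : Fin k, a i ∈ LeafSet T r v ↔ s' ≤ i ∧ i ≤ t' := by
            intro i
            rw [hLv]
            constructor
            · rintro ⟨j, h1, h2, e⟩
              obtain rfl := hinj e
              exact ⟨h1, h2⟩
            · rintro ⟨h1, h2⟩
              exact ⟨i, h1, h2, rfl⟩
          obtain ⟨e1, e2, e3, e4, e5⟩ := hintv v hdeg2 hvr hva'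
          have hlxv : lx v = ((s' : ℕ) : ℝ) + 2 * (1/4) := by
            rw [e1, csInf_shift hst' hmemv]
          have hqxv : qx v = ((s' : ℕ) : ℝ) + 3 * (1/4) := by
            rw [e3, csInf_shift hst' hmemv]
          exact ⟨s', ((s' : ℕ) : ℝ) + 1/2, hLsub ((hmemv s').2 ⟨le_refl _, hst'⟩),
            by linarith, by linarith, le_refl _, by linarith, e5⟩
    obtain ⟨ι, α, hmemu, hα1, hα2, hα3, hα4, hry⟩ := hpack
    have hι0 : (0 : ℝ) ≤ ((ι : ℕ) : ℝ) := Nat.cast_nonneg _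
    have hιk : ((ι : ℕ) : ℝ) ≤ (k : ℝ) - 1 := by
      have h1 : (ι : ℕ) + 1 ≤ k := ι.2
      have h2 : ((ι : ℕ) : ℝ) + 1 ≤ (k : ℝ) := by exact_mod_cast h1
      linarith
    by_cases hur : u = r
    · subst hur
      obtain ⟨f1, f2, f3, f4⟩ := hrdat
      have hdv1 : T.dist u v = 1 := by rw [hdist, SimpleGraph.dist_self]
      have hdv1R : (T.dist u v : ℝ) = 1 := by exact_mod_cast hdv1
      refine ⟨by linarith [f3, hry, hdv1R], ?_⟩
      exact icc_nt (by linarith [f1]) (by linarith [f2]) hα1 hα2 (by linarith)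
    · by_cases hua' : u = a'
      · exfalso
        subst hua'
        have hd2 : T.degree u = 2 := ha'deg.resolve_right hur
        obtain ⟨w, hadj, hdw⟩ := back_neighbor hT hur
        have hdak : T.dist r (a ⟨k - 1, by omega⟩) = T.dist r u + 1 := parent_dist hT ha'
        have hvw : v ≠ w := by rintro rfl; omega
        have hakw : a ⟨k - 1, by omega⟩ ≠ w := by
          intro e; rw [← e] at hdw; omega
        have hsub : ({v, a ⟨k - 1, by omega⟩, w} : Finset V) ⊆ T.neighborFinset u := by
          intro x hx
          simp only [Finset.mem_insert, Finset.mem_singleton] at hx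
          rcases hx with rfl | rfl | rfl
          · exact (T.mem_neighborFinset _ _).2 hpar.2.2
          · exact (T.mem_neighborFinset _ _).2 ha'.2.2
          · exact (T.mem_neighborFinset _ _).2 hadj
        have hcard : ({v, a ⟨k - 1, by omega⟩, w} : Finset V).card = 3 := by
          rw [Finset.card_insert_of_notMem (by simp [hvk, hvw]), Finset.card_pair hakw]
        have hle := Finset.card_le_card hsub
        rw [hcard, T.card_neighborFinset_eq_degree] at hle
        omega
      · have hdeg2u : 2 ≤ T.degree u := parent_deg_two hT hpar hur
        obtain ⟨s, t, hst, hLu⟩ := hconsec u hdeg2u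
        have hmemu' : ∀ i : Fin k, a i ∈ LeafSet T r u ↔ s ≤ i ∧ i ≤ t := by
          intro i
          rw [hLu]
          constructor
          · rintro ⟨j, h1, h2, e⟩
            obtain rfl := hinj e
            exact ⟨h1, h2⟩
          · rintro ⟨h1, h2⟩
            exact ⟨i, h1, h2, rfl⟩
        obtain ⟨e1, e2, e3, e4, e5⟩ := hintv u hdeg2u hur hua'
        obtain ⟨hs1, hs2⟩ := (hmemu' ι).1 hmemu
        have hs1R : ((s : ℕ) : ℝ) ≤ ((ι : ℕ) : ℝ) := by exact_mod_cast Fin.le_def.1 hs1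
        have hs2R : ((ι : ℕ) : ℝ) ≤ ((t : ℕ) : ℝ) := by exact_mod_cast Fin.le_def.1 hs2
        have hlxu : lx u = ((s : ℕ) : ℝ) + 2 * (1/4) := by
          rw [e1, csInf_shift hst hmemu']
        have hpxu : px u = ((t : ℕ) : ℝ) + 3 * (1/4) := by
          rw [e2, csSup_shift hst hmemu']
        refine ⟨by linarith [e4, hry, hdistR], ?_⟩
        exact icc_nt (by linarith) (by linarith) hα1 hα2 (by linarith)
  · -- part (b)
    rintro hv rfl
    obtain ⟨f1, f2, f3, f4⟩ := hrdat
    rcases hv with rfl | rfl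
    · obtain ⟨g1, g2, g3, g4, g5⟩ := ha0
      refine ⟨by rw [f4, g5], ?_⟩
      have hqxr : (3/4 : ℝ) ≤ qx u := by
        by_cases h' : a' = u
        · have := (haeq h').2.2.1
          linarith [this]
        · have := (hane h').2.2.2.1
          linarith [this]
      exact icc_nt (α := 1/2) (β := 3/4) (by linarith [f1]) hqxr
        (by linarith [g1]) (by linarith [g3]) (by linarith)
    · have ha'r : a' = u := parent_unique hT ha' hpar
      obtain ⟨g1, g2, g3, g4, g5⟩ := hak
      obtain ⟨e1, e2, e3, e4, e5⟩ := haeq ha'r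
      refine ⟨by rw [f4, g5], ?_⟩
      exact icc_nt (α := (k : ℝ) - 1) (β := (k : ℝ) - 1 + 1/4)
        (by linarith [e1]) (by linarith [e3]) (by linarith [g1]) (by linarith [g3])
        (by linarith)
  · -- part (c)
    rintro rfl hur
    have hu : u = a' := parent_unique hT hpar ha'
    subst hu
    obtain ⟨⟨e1, e2, e3, e4, e5⟩, -⟩ := hane hur
    obtain ⟨g1, g2, g3, g4, g5⟩ := hak
    refine ⟨by rw [e4, g4], ?_⟩
    exact icc_nt (α := (k : ℝ) - 1 + 2 * (1/4)) (β := (k : ℝ) - 1 + 3 * (1/4))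
      (by linarith [e1]) (by linarith [e2]) (by linarith [g1]) (by linarith [g2])
      (by linarith)
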